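/- The function ρ₂(z) = ((θ₂(0)-θ₂(u₀))e^{-(θ₁(0)+θ₂(u₀))z} - (θ₂(0)+θ₁(u₀))e^{(θ₁(u₀)-θ₁(0))z}) / (e^{θ₁(u₀)z} - e^{-θ₂(u₀)z}) is strictly increasing on (0,∞). -/

import Mathlib

open Real Set

noncomputable def th1 (μ σ r u : ℝ) : ℝ := (Real.sqrt ((μ - u)^2 + 2*r*σ^2) + (μ - u)) / σ^2
noncomputable def th2 (μ σ r u : ℝ) : ℝ := (Real.sqrt ((μ - u)^2 + 2*r*σ^2) - (μ - u)) / σ^2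

noncomputable def rho1 (μ σ r u₀ z : ℝ) : ℝ :=
  ((th1 μ σ r 0 - th1 μ σ r u₀) * Real.exp ((th1 μ σ r u₀ + th2 μ σ r 0) * z)
    - (th1 μ σ r 0 + th2 μ σ r u₀) * Real.exp ((th2 μ σ r 0 - th2 μ σ r u₀) * z)) /
  (Real.exp (th1 μ σ r u₀ * z) - Real.exp (-(th2 μ σ r u₀) * z))

noncomputable def rho2 (μ σ r u₀ z : ℝ) : ℝ :=
  ((th2 μ σ r 0 - th2 μ σ r u₀) * Real.exp (-(th1 μ σ r 0 + th2 μ σ r u₀) * z)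
    - (th2 μ σ r 0 + th1 μ σ r u₀) * Real.exp ((th1 μ σ r u₀ - th1 μ σ r 0) * z)) /
  (Real.exp (th1 μ σ r u₀ * z) - Real.exp (-(th2 μ σ r u₀) * z))

/-!
With `a = θ₁(u₀)`, `b = θ₂(u₀)`, `c = θ₁(0)`, `d = θ₂(0)`, all positive, dividing numerator and
denominator by `e^{-bz}` gives
`ρ₂(z) = -(d + a) e^{-cz} - (a + b) / (e^{cz} (e^{(a+b)z} - 1))`,
a sum of two strictly increasing functions on `(0, ∞)`.
-/

lemma th1_pos (μ σ r u : ℝ) (hσ : 0 < σ) (hr : 0 < r) : 0 < th1 μ σ r u := by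
  have := neg_sqrt_lt_of_sq_lt
    (lt_add_of_pos_right ((μ - u) ^ 2) (by positivity : 0 < 2 * r * σ ^ 2))
  exact div_pos (by linarith) (by positivity)

lemma th2_pos (μ σ r u : ℝ) (hσ : 0 < σ) (hr : 0 < r) : 0 < th2 μ σ r u := by
  have := lt_sqrt_of_sq_lt
    (lt_add_of_pos_right ((μ - u) ^ 2) (by positivity : 0 < 2 * r * σ ^ 2))
  exact div_pos (by linarith) (by positivity)

lemma exp_ratio_eq_sub {a b c d z : ℝ} (h : (a + b) * z ≠ 0) :
    ((d - b) * exp (-(c + b) * z) - (d + a) * exp ((a - c) * z)) /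
        (exp (a * z) - exp (-b * z)) =
      -(d + a) * exp (-(c * z)) - (a + b) / (exp (c * z) * (exp ((a + b) * z) - 1)) := by
  have hE : exp ((a + b) * z) - 1 ≠ 0 := sub_ne_zero.mpr (by simpa using h)
  have h1 : exp (-(c + b) * z) = exp (-b * z) * (exp (c * z))⁻¹ := by
    rw [← exp_neg, ← exp_add]; ring_nf
  have h2 : exp ((a - c) * z) = exp (-b * z) * exp ((a + b) * z) * (exp (c * z))⁻¹ := by
    rw [← exp_neg, ← exp_add, ← exp_add]; ring_nf
  have h3 : exp (a * z) = exp (-b * z) * exp ((a + b) * z) := by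
    rw [← exp_add]; ring_nf
  rw [h1, h2, h3, exp_neg (c * z)]
  have hF := (exp_pos (-b * z)).ne'
  have hG := (exp_pos (c * z)).ne'
  generalize exp ((a + b) * z) = E at hE ⊢
  generalize exp (-b * z) = F at hF ⊢
  generalize exp (c * z) = G at hG ⊢
  field_simp
  ring

lemma strictMono_neg_mul_exp_neg_mul {k c : ℝ} (hk : 0 < k) (hc : 0 < c) :
    StrictMono fun z ↦ -k * exp (-(c * z)) := by
  intro x y hxy
  have : exp (-(c * y)) < exp (-(c * x)) := exp_lt_exp.mpr (by nlinarith)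
  nlinarith

lemma strictMonoOn_neg_div_exp_mul_exp_sub_one {k c e : ℝ} (hk : 0 < k) (hc : 0 ≤ c)
    (he : 0 < e) :
    StrictMonoOn (fun z ↦ -k / (exp (c * z) * (exp (e * z) - 1))) (Ioi 0) := by
  intro x hx y _ hxy
  have hx' : (0 : ℝ) < x := hx
  have hEx : 0 < exp (e * x) - 1 := sub_pos.mpr (one_lt_exp_iff.mpr (by positivity))
  have hden : exp (c * x) * (exp (e * x) - 1) < exp (c * y) * (exp (e * y) - 1) :=
    mul_lt_mul' (exp_le_exp.mpr (by nlinarith)) (by gcongr) hEx.le (exp_pos _)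
  simp only [neg_div, neg_lt_neg_iff]
  exact div_lt_div_of_pos_left hk (by positivity) hden

theorem stmt14_general (μ σ r u₀ : ℝ) (hσ : 0 < σ) (hr : 0 < r) :
    StrictMonoOn (rho2 μ σ r u₀) (Set.Ioi 0) := by
  set a := th1 μ σ r u₀
  set b := th2 μ σ r u₀
  set c := th1 μ σ r 0
  set d := th2 μ σ r 0
  have ha : 0 < a := th1_pos μ σ r u₀ hσ hr
  have hb : 0 < b := th2_pos μ σ r u₀ hσ hr
  have hc : 0 < c := th1_pos μ σ r 0 hσ hr
  have hd : 0 < d := th2_pos μ σ r 0 hσ hr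
  have hsum : StrictMonoOn (fun z ↦ -(d + a) * exp (-(c * z))
      + -(a + b) / (exp (c * z) * (exp ((a + b) * z) - 1))) (Ioi 0) :=
    ((strictMono_neg_mul_exp_neg_mul (by positivity) hc).strictMonoOn _).add_monotone
      (strictMonoOn_neg_div_exp_mul_exp_sub_one (by positivity) hc.le (by positivity)).monotoneOn
  refine hsum.congr fun z (hz : 0 < z) ↦ ?_
  rw [rho2, exp_ratio_eq_sub (by positivity)]
  ring

theorem stmt14 (μ σ r u₀ : ℝ) (hσ : 0 < σ) (hr : 0 < r) (hu₀ : 0 < u₀) :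
    StrictMonoOn (rho2 μ σ r u₀) (Set.Ioi 0) :=
  stmt14_general μ σ r u₀ hσ hr
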